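/- arXiv:1801.01940 — 5 statements merged into one kernel-verified Lean document; each statement's English description precedes it below -/
import Mathlib

section
/- Let f, g > 0 be integrable functions on an interval I such that f/g is increasing on I. Then for any points x1 < x2 ≤ x3 < x4 in I, (∫_{x1}^{x2} f)/(∫_{x1}^{x2} g) ≤ (∫_{x3}^{x4} f)/(∫_{x3}^{x4} g). -/
open MeasureTheory intervalIntegral

/-- If `f, g > 0` are integrable on an interval `I` and `f/g` is increasing, then for
`x1 < x2 ≤ x3 < x4` in `I`, the ratio of integrals of `f` and `g` over `[x1,x2]` is at
most that over `[x3,x4]`. -/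
theorem acf_lemma_integral (I : Set ℝ) (hI : I.OrdConnected) (f g : ℝ → ℝ)
    (hf : IntegrableOn f I) (hg : IntegrableOn g I)
    (hfpos : ∀ x ∈ I, 0 < f x) (hgpos : ∀ x ∈ I, 0 < g x)
    (hmono : MonotoneOn (fun x => f x / g x) I)
    (x1 x2 x3 x4 : ℝ) (h1 : x1 ∈ I) (h2 : x2 ∈ I) (h3 : x3 ∈ I) (h4 : x4 ∈ I)
    (h12 : x1 < x2) (h23 : x2 ≤ x3) (h34 : x3 < x4) :
    (∫ x in x1..x2, f x) / (∫ x in x1..x2, g x) ≤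
      (∫ x in x3..x4, f x) / (∫ x in x3..x4, g x) := by
  have hsub12 : Set.Icc x1 x2 ⊆ I := hI.out h1 h2
  have hsub34 : Set.Icc x3 x4 ⊆ I := hI.out h3 h4
  have hif12 : IntervalIntegrable f volume x1 x2 := by
    rw [intervalIntegrable_iff_integrableOn_Icc_of_le h12.le]
    exact hf.mono_set hsub12
  have hig12 : IntervalIntegrable g volume x1 x2 := by
    rw [intervalIntegrable_iff_integrableOn_Icc_of_le h12.le]
    exact hg.mono_set hsub12
  have hif34 : IntervalIntegrable f volume x3 x4 := by
    rw [intervalIntegrable_iff_integrableOn_Icc_of_le h34.le]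
    exact hf.mono_set hsub34
  have hig34 : IntervalIntegrable g volume x3 x4 := by
    rw [intervalIntegrable_iff_integrableOn_Icc_of_le h34.le]
    exact hg.mono_set hsub34
  have hg12pos : 0 < ∫ x in x1..x2, g x :=
    intervalIntegral.intervalIntegral_pos_of_pos_on hig12
      (fun x hx => hgpos x (hsub12 ⟨hx.1.le, hx.2.le⟩)) h12
  have hg34pos : 0 < ∫ x in x3..x4, g x :=
    intervalIntegral.intervalIntegral_pos_of_pos_on hig34
      (fun x hx => hgpos x (hsub34 ⟨hx.1.le, hx.2.le⟩)) h34
  set c2 := f x2 / g x2 with hc2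
  set c3 := f x3 / g x3 with hc3
  have hc23 : c2 ≤ c3 := hmono h2 h3 h23
  have hle1 : (∫ x in x1..x2, f x) ≤ c2 * ∫ x in x1..x2, g x := by
    rw [← intervalIntegral.integral_const_mul]
    apply intervalIntegral.integral_mono_on h12.le hif12 (hig12.const_mul c2)
    intro x hx
    have hxI : x ∈ I := hsub12 hx
    have := hmono hxI h2 hx.2
    have hgx := hgpos x hxI
    rw [div_le_div_iff₀ hgx (hgpos x2 h2)] at this
    rw [hc2, div_mul_eq_mul_div, le_div_iff₀ (hgpos x2 h2)]
    linarith
  have hle2 : c3 * (∫ x in x3..x4, g x) ≤ ∫ x in x3..x4, f x := by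
    rw [← intervalIntegral.integral_const_mul]
    apply intervalIntegral.integral_mono_on h34.le (hig34.const_mul c3) hif34
    intro x hx
    have hxI : x ∈ I := hsub34 hx
    have := hmono h3 hxI hx.1
    have hgx := hgpos x hxI
    rw [div_le_div_iff₀ (hgpos x3 h3) hgx] at this
    rw [hc3, div_mul_eq_mul_div, div_le_iff₀ (hgpos x3 h3)]
    linarith
  calc (∫ x in x1..x2, f x) / (∫ x in x1..x2, g x) ≤ c2 := by
        rw [div_le_iff₀ hg12pos]; exact hle1
    _ ≤ c3 := hc23
    _ ≤ (∫ x in x3..x4, f x) / (∫ x in x3..x4, g x) := by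
        rw [le_div_iff₀ hg34pos]; exact hle2
end

section
/- Let f ≥ g > 0 be continuous integrable functions on [0,1) with f/g increasing, and let M > 0 satisfy ∫_0^1 f > M and ∫_0^1 g > M. If x1 is the unique value in (0,1) with M + ∫_0^{x1} g = ∫_{x1}^1 g, and x2 is the unique value with M + ∫_0^{x2} f = ∫_{x2}^1 f, then x1 ≤ x2. -/
open MeasureTheory intervalIntegral

/-- Let `f ≥ g > 0` be continuous integrable functions on `[0,1)` with `f/g` increasing,
and `M > 0` with `∫_0^1 f > M`, `∫_0^1 g > M`. If `x1` balances `g` (i.e.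
`M + ∫_0^{x1} g = ∫_{x1}^1 g`) and `x2` balances `f`, then `x1 ≤ x2`. -/
theorem balance_point_mono (f g : ℝ → ℝ) (M : ℝ)
    (hfc : ContinuousOn f (Set.Ico 0 1)) (hgc : ContinuousOn g (Set.Ico 0 1))
    (hf : IntegrableOn f (Set.Ico 0 1)) (hg : IntegrableOn g (Set.Ico 0 1))
    (hgpos : ∀ x ∈ Set.Ico (0:ℝ) 1, 0 < g x)
    (hfg : ∀ x ∈ Set.Ico (0:ℝ) 1, g x ≤ f x)
    (hmono : MonotoneOn (fun x => f x / g x) (Set.Ico 0 1))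
    (hM : 0 < M)
    (hMf : M < ∫ x in (0:ℝ)..1, f x) (hMg : M < ∫ x in (0:ℝ)..1, g x)
    (x1 x2 : ℝ) (hx1 : x1 ∈ Set.Ioo (0:ℝ) 1) (hx2 : x2 ∈ Set.Ioo (0:ℝ) 1)
    (he1 : M + ∫ x in (0:ℝ)..x1, g x = ∫ x in x1..1, g x)
    (he2 : M + ∫ x in (0:ℝ)..x2, f x = ∫ x in x2..1, f x) :
    x1 ≤ x2 := by
  by_contra hlt
  push_neg at hlt  -- x2 < x1
  obtain ⟨hx1a, hx1b⟩ := hx1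
  obtain ⟨hx2a, hx2b⟩ := hx2
  -- integrability on Ioc 0 1
  have hg1 : IntegrableOn g (Set.Ioc 0 1) := by
    refine hg.congr_set_ae ?_
    exact (MeasureTheory.Ico_ae_eq_Ioc (μ := volume) (a := (0:ℝ)) (b := 1)).symm
  have hf1 : IntegrableOn f (Set.Ioc 0 1) := by
    refine hf.congr_set_ae ?_
    exact (MeasureTheory.Ico_ae_eq_Ioc (μ := volume) (a := (0:ℝ)) (b := 1)).symm
  have hgI : ∀ a b : ℝ, 0 ≤ a → b ≤ 1 → a ≤ b → IntervalIntegrable g volume a b := by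
    intro a b ha hb hab
    rw [intervalIntegrable_iff_integrableOn_Ioc_of_le hab]
    exact hg1.mono_set (Set.Ioc_subset_Ioc ha hb)
  have hfI : ∀ a b : ℝ, 0 ≤ a → b ≤ 1 → a ≤ b → IntervalIntegrable f volume a b := by
    intro a b ha hb hab
    rw [intervalIntegrable_iff_integrableOn_Ioc_of_le hab]
    exact hf1.mono_set (Set.Ioc_subset_Ioc ha hb)
  have hx2mem : x2 ∈ Set.Ico (0:ℝ) 1 := ⟨hx2a.le, hx2b⟩
  set c : ℝ := f x2 / g x2 with hc
  have hgx2 : 0 < g x2 := hgpos x2 hx2mem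
  have hc1 : 1 ≤ c := (one_le_div hgx2).2 (hfg x2 hx2mem)
  -- pointwise inequalities
  have hptA : ∀ x ∈ Set.Ico x2 1, c * g x ≤ f x := by
    intro x hx
    have hxm : x ∈ Set.Ico (0:ℝ) 1 := ⟨le_trans hx2a.le hx.1, hx.2⟩
    have := hmono hx2mem hxm hx.1
    exact (le_div_iff₀ (hgpos x hxm)).1 this
  have hptB : ∀ x ∈ Set.Icc (0:ℝ) x2, f x ≤ c * g x := by
    intro x hx
    have hxm : x ∈ Set.Ico (0:ℝ) 1 := ⟨hx.1, lt_of_le_of_lt hx.2 hx2b⟩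
    have := hmono hxm hx2mem hx.2
    exact (div_le_iff₀ (hgpos x hxm)).1 this
  -- inequality A : c * ∫_{x2}^1 g ≤ ∫_{x2}^1 f
  have hA : c * ∫ x in x2..1, g x ≤ ∫ x in x2..1, f x := by
    rw [← intervalIntegral.integral_const_mul]
    refine intervalIntegral.integral_mono_ae_restrict hx2b.le
      ((hgI x2 1 hx2a.le le_rfl hx2b.le).const_mul c) (hfI x2 1 hx2a.le le_rfl hx2b.le) ?_
    have hset : Set.Icc x2 (1:ℝ) =ᵐ[volume] Set.Ico x2 1 :=
      (MeasureTheory.Ico_ae_eq_Icc (μ := volume) (a := x2) (b := 1)).symm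
    rw [Measure.restrict_congr_set hset]
    exact ae_restrict_of_forall_mem measurableSet_Ico hptA
  -- inequality B : ∫_0^{x2} f ≤ c * ∫_0^{x2} g
  have hB : ∫ x in (0:ℝ)..x2, f x ≤ c * ∫ x in (0:ℝ)..x2, g x := by
    rw [← intervalIntegral.integral_const_mul]
    exact intervalIntegral.integral_mono_on hx2a.le (hfI 0 x2 le_rfl hx2b.le hx2a.le)
      ((hgI 0 x2 le_rfl hx2b.le hx2a.le).const_mul c) hptB
  -- J := ∫_{x2}^{x1} g > 0
  have hJpos : 0 < ∫ x in x2..x1, g x := by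
    refine intervalIntegral.intervalIntegral_pos_of_pos_on
      (hgI x2 x1 hx2a.le hx1b.le hlt.le) ?_ hlt
    intro x hx
    exact hgpos x ⟨le_trans hx2a.le hx.1.le, lt_trans hx.2 hx1b⟩
  -- additivity
  have add1 : (∫ x in x2..x1, g x) + ∫ x in x1..1, g x = ∫ x in x2..1, g x :=
    intervalIntegral.integral_add_adjacent_intervals
      (hgI x2 x1 hx2a.le hx1b.le hlt.le) (hgI x1 1 hx1a.le le_rfl hx1b.le)
  have add2 : (∫ x in (0:ℝ)..x2, g x) + ∫ x in x2..x1, g x = ∫ x in (0:ℝ)..x1, g x :=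
    intervalIntegral.integral_add_adjacent_intervals
      (hgI 0 x2 le_rfl hx2b.le hx2a.le) (hgI x2 x1 hx2a.le hx1b.le hlt.le)
  -- assemble
  set S0 := ∫ x in (0:ℝ)..x2, g x
  set S1 := ∫ x in x2..1, g x
  set J := ∫ x in x2..x1, g x
  have hI : S1 - S0 = M + 2 * J := by
    have := he1
    linarith [add1, add2]
  have hmul : 1 * (M + 2 * J) ≤ c * (M + 2 * J) :=
    mul_le_mul_of_nonneg_right hc1 (by linarith)
  nlinarith [hA, hB, he2, hI, hmul, hJpos, hM]
end

section
/- Under the hypotheses of the previous lemma, if x1 ∈ (0,1) satisfies M + ∫_0^{x1} g = ∫_{x1}^1 g, then M + ∫_0^{x1} f ≤ ∫_{x1}^1 f. -/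
open MeasureTheory intervalIntegral

/-- Under the hypotheses of the balance-point lemma, if `x1 ∈ (0,1)` satisfies
`M + ∫_0^{x1} g = ∫_{x1}^1 g`, then `M + ∫_0^{x1} f ≤ ∫_{x1}^1 f`. -/
theorem balance_point_ineq (f g : ℝ → ℝ) (M : ℝ)
    (hfc : ContinuousOn f (Set.Ico 0 1)) (hgc : ContinuousOn g (Set.Ico 0 1))
    (hf : IntegrableOn f (Set.Ico 0 1)) (hg : IntegrableOn g (Set.Ico 0 1))
    (hgpos : ∀ x ∈ Set.Ico (0:ℝ) 1, 0 < g x)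
    (hfg : ∀ x ∈ Set.Ico (0:ℝ) 1, g x ≤ f x)
    (hmono : MonotoneOn (fun x => f x / g x) (Set.Ico 0 1))
    (hM : 0 < M)
    (hMf : M < ∫ x in (0:ℝ)..1, f x) (hMg : M < ∫ x in (0:ℝ)..1, g x)
    (x1 : ℝ) (hx1 : x1 ∈ Set.Ioo (0:ℝ) 1)
    (he1 : M + ∫ x in (0:ℝ)..x1, g x = ∫ x in x1..1, g x) :
    M + (∫ x in (0:ℝ)..x1, f x) ≤ ∫ x in x1..1, f x := by
  obtain ⟨hx0, hx1'⟩ := hx1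
  have hx1mem : x1 ∈ Set.Ico (0:ℝ) 1 := ⟨le_of_lt hx0, hx1'⟩
  set c := f x1 / g x1 with hc
  have hgx1 : 0 < g x1 := hgpos x1 hx1mem
  have hc1 : 1 ≤ c := (one_le_div hgx1).mpr (hfg x1 hx1mem)
  -- integrability on subintervals
  have hIoc1 : Set.Ioc (0:ℝ) x1 ⊆ Set.Ico 0 1 := fun x hx => ⟨le_of_lt hx.1, lt_of_le_of_lt hx.2 hx1'⟩
  have hIoo2 : Set.Ioo x1 (1:ℝ) ⊆ Set.Ico 0 1 := fun x hx => ⟨le_of_lt (lt_trans hx0 hx.1), hx.2⟩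
  have hfint1 : IntervalIntegrable f volume 0 x1 :=
    (intervalIntegrable_iff_integrableOn_Ioc_of_le (le_of_lt hx0)).mpr (hf.mono_set hIoc1)
  have hgint1 : IntervalIntegrable g volume 0 x1 :=
    (intervalIntegrable_iff_integrableOn_Ioc_of_le (le_of_lt hx0)).mpr (hg.mono_set hIoc1)
  have hfint2 : IntervalIntegrable f volume x1 1 :=
    (intervalIntegrable_iff_integrableOn_Ioo_of_le (le_of_lt hx1')).mpr (hf.mono_set hIoo2)
  have hgint2 : IntervalIntegrable g volume x1 1 :=
    (intervalIntegrable_iff_integrableOn_Ioo_of_le (le_of_lt hx1')).mpr (hg.mono_set hIoo2)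
  -- first inequality: ∫_0^{x1} f ≤ c * ∫_0^{x1} g
  have h1 : (∫ x in (0:ℝ)..x1, f x) ≤ c * ∫ x in (0:ℝ)..x1, g x := by
    rw [← intervalIntegral.integral_const_mul]
    refine intervalIntegral.integral_mono_on (le_of_lt hx0) hfint1 (hgint1.const_mul c) ?_
    intro x hx
    have hxmem : x ∈ Set.Ico (0:ℝ) 1 := ⟨hx.1, lt_of_le_of_lt hx.2 hx1'⟩
    have hgx : 0 < g x := hgpos x hxmem
    have := hmono hxmem hx1mem hx.2
    calc f x = (f x / g x) * g x := by field_simp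
    _ ≤ c * g x := by exact mul_le_mul_of_nonneg_right this (le_of_lt hgx)
  -- second inequality: c * ∫_{x1}^1 g ≤ ∫_{x1}^1 f
  have h2 : c * (∫ x in x1..1, g x) ≤ ∫ x in x1..1, f x := by
    rw [← intervalIntegral.integral_const_mul]
    refine intervalIntegral.integral_mono_ae_restrict (le_of_lt hx1') (hgint2.const_mul c) hfint2 ?_
    have hne : ∀ᵐ x ∂(volume : Measure ℝ), x ≠ 1 := by
      rw [Filter.eventually_iff, mem_ae_iff]
      simpa using Real.volume_singleton (a := 1)
    filter_upwards [ae_restrict_mem measurableSet_Icc,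
      hne.filter_mono (ae_mono Measure.restrict_le_self)] with x hx hxne
    have hxlt : x < 1 := lt_of_le_of_ne hx.2 hxne
    have hxmem : x ∈ Set.Ico (0:ℝ) 1 := ⟨le_trans (le_of_lt hx0) hx.1, hxlt⟩
    have hgx : 0 < g x := hgpos x hxmem
    have := hmono hx1mem hxmem hx.1
    calc c * g x ≤ (f x / g x) * g x := mul_le_mul_of_nonneg_right this (le_of_lt hgx)
    _ = f x := by field_simp
  nlinarith [mul_le_mul_of_nonneg_right (sub_nonneg.mpr hc1) (le_of_lt hM)]
end

section
/- There exists θ_0 > 0 such that for every θ with 0 < θ ≤ θ_0, the unique t_θ ∈ (-1,1) satisfying ∫_{-1}^{t_θ} ((1+t)/(1-t))^{θ/π} dt = ∫_{t_θ}^{1} ((1+t)/(1-t))^{θ/π} dt obeys 0 < t_θ ≤ 2θ/π. -/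
/-!
Write `w` for the weight `((1+s)/(1-s))^a` with `a = θ/π`, so that `w(-s) = 1/w(s)`.
The imbalance `c ↦ ∫_{-1}^c w - ∫_c^1 w` is strictly increasing and vanishes at `t_θ`, so it
suffices to show that it is negative at `0` and nonnegative at `2a`. Folding the integrals at `0`
writes it as `∫_0^c (w + 1/w) - ∫_c^1 (w - 1/w)`. At `c = 0` this is negative because `w > 1`
on `(0,1)`. At `c = 2a` the first term is at least `2c = 4a` by AM-GM, while
`w - 1/w ≤ w² - 1 ≤ 2^{2a}(1-s)^{-2a} - 1` on `[0,1)` bounds the second by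
`2^{2a}/(1-2a) - 1`, which is at most `4a` once `a ≤ 1/100`.
-/

open MeasureTheory intervalIntegral Real Set

namespace BalancePoint

section Imbalance

variable {f : ℝ → ℝ}

noncomputable def imbalance (f : ℝ → ℝ) (a b c : ℝ) : ℝ :=
  (∫ s in a..c, f s) - ∫ s in c..b, f s

theorem intervalIntegrable_of_mem_Icc {a b c d : ℝ} (hf : IntervalIntegrable f volume a b)
    (hc : c ∈ Icc a b) (hd : d ∈ Icc a b) : IntervalIntegrable f volume c d :=
  hf.mono_set (uIcc_subset_uIcc (Icc_subset_uIcc hc) (Icc_subset_uIcc hd))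

theorem imbalance_strictMonoOn {a b : ℝ} (hf : IntervalIntegrable f volume a b)
    (hpos : ∀ s ∈ Ioo a b, 0 < f s) : StrictMonoOn (imbalance f a b) (Icc a b) := by
  intro x hx y hy hxy
  have hab : a ≤ b := hx.1.trans hx.2
  have hxy_pos : 0 < ∫ s in x..y, f s :=
    intervalIntegral_pos_of_pos_on (intervalIntegrable_of_mem_Icc hf hx hy)
      (fun s hs => hpos s ⟨hx.1.trans_lt hs.1, hs.2.trans_le hy.2⟩) hxy
  have hleft := integral_add_adjacent_intervals
    (intervalIntegrable_of_mem_Icc hf (left_mem_Icc.2 hab) hx)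
    (intervalIntegrable_of_mem_Icc hf hx hy)
  have hright := integral_add_adjacent_intervals
    (intervalIntegrable_of_mem_Icc hf hx hy)
    (intervalIntegrable_of_mem_Icc hf hy (right_mem_Icc.2 hab))
  simp only [imbalance]
  linarith

theorem intervalIntegrable_comp_neg_of_symm {r : ℝ} (hf : IntervalIntegrable f volume (-r) r) :
    IntervalIntegrable (fun s => f (-s)) volume (-r) r := by
  simpa using (hf.comp_sub_left 0).symm

theorem imbalance_eq_integral_even_sub_integral_odd {r c : ℝ}
    (hf : IntervalIntegrable f volume (-r) r) (hc : c ∈ Icc (-r) r) :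
    imbalance f (-r) r c = (∫ s in 0..c, (f s + f (-s))) - ∫ s in c..r, (f s - f (-s)) := by
  have hr : 0 ∈ Icc (-r) r := ⟨by linarith [hc.1, hc.2], by linarith [hc.1, hc.2]⟩
  have hnc : -c ∈ Icc (-r) r := ⟨by linarith [hc.2], by linarith [hc.1]⟩
  have hl : -r ∈ Icc (-r) r := ⟨le_rfl, by linarith [hc.1, hc.2]⟩
  have hu : r ∈ Icc (-r) r := ⟨by linarith [hc.1, hc.2], le_rfl⟩
  have hfn := intervalIntegrable_comp_neg_of_symm hf
  rw [imbalance, integral_add (intervalIntegrable_of_mem_Icc hf hr hc)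
      (intervalIntegrable_of_mem_Icc hfn hr hc),
    integral_sub (intervalIntegrable_of_mem_Icc hf hc hu) (intervalIntegrable_of_mem_Icc hfn hc hu),
    integral_comp_neg, integral_comp_neg, neg_zero,
    ← integral_add_adjacent_intervals (intervalIntegrable_of_mem_Icc hf hl hnc)
      (intervalIntegrable_of_mem_Icc hf hnc hc),
    ← integral_add_adjacent_intervals (intervalIntegrable_of_mem_Icc hf hnc hr)
      (intervalIntegrable_of_mem_Icc hf hr hc)]
  ring

end Imbalance

section Weight

variable {a s : ℝ}

noncomputable def weight (a s : ℝ) : ℝ := ((1 + s) / (1 - s)) ^ a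

theorem weight_base_nonneg (hs : s ∈ Icc (-1) 1) : 0 ≤ (1 + s) / (1 - s) :=
  div_nonneg (by linarith [hs.1]) (by linarith [hs.2])

theorem weight_nonneg (hs : s ∈ Icc (-1) 1) : 0 ≤ weight a s :=
  rpow_nonneg (weight_base_nonneg hs) a

theorem weight_pos (hs : s ∈ Ioo (-1) 1) : 0 < weight a s :=
  rpow_pos_of_pos (div_pos (by linarith [hs.1]) (by linarith [hs.2])) a

theorem one_lt_weight (ha : 0 < a) (hs : s ∈ Ioo 0 1) : 1 < weight a s := by
  refine one_lt_rpow ?_ ha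
  rw [one_lt_div (by linarith [hs.2])]
  linarith [hs.1]

theorem one_le_weight (ha : 0 ≤ a) (hs : s ∈ Ico 0 1) : 1 ≤ weight a s :=
  one_le_rpow ((one_le_div (by linarith [hs.2])).2 (by linarith [hs.1])) ha

theorem weight_neg (hs : s ∈ Icc (-1) 1) : weight a (-s) = (weight a s)⁻¹ := by
  rw [weight, weight, ← inv_rpow (weight_base_nonneg hs), inv_div]
  ring_nf

theorem weight_two_mul (hs : s ∈ Icc (-1) 1) : weight (2 * a) s = weight a s ^ 2 := by
  rw [weight, weight, mul_comm, rpow_mul (weight_base_nonneg hs), rpow_two]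

theorem weight_le_two_rpow_mul (ha : 0 ≤ a) (hs : s ∈ Icc (-1) 1) :
    weight a s ≤ 2 ^ a * (1 - s) ^ (-a) := by
  have hs1 : 0 ≤ 1 - s := by linarith [hs.2]
  calc weight a s ≤ (2 / (1 - s)) ^ a :=
        rpow_le_rpow (weight_base_nonneg hs)
          (div_le_div_of_nonneg_right (by linarith [hs.2]) hs1) ha
    _ = 2 ^ a * (1 - s) ^ (-a) := by
        rw [div_rpow zero_le_two hs1, rpow_neg hs1, div_eq_mul_inv]

theorem intervalIntegrable_one_sub_rpow_neg {b : ℝ} (hb : b < 1) :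
    IntervalIntegrable (fun s => (1 - s) ^ (-b)) volume (-1) 1 := by
  have h := ((intervalIntegral.intervalIntegrable_rpow' (a := 0) (b := 2)
    (by linarith : -1 < -b)).comp_sub_left 1).symm
  norm_num at h
  exact h

theorem integral_one_sub_rpow_neg {b : ℝ} (hb : b < 1) :
    ∫ s in (0 : ℝ)..1, (1 - s) ^ (-b) = 1 / (1 - b) := by
  rw [integral_comp_sub_left (fun x => x ^ (-b)), sub_self, sub_zero,
    integral_rpow (Or.inl (by linarith)), one_rpow, zero_rpow (by linarith)]
  ring_nf

theorem intervalIntegrable_weight (ha : 0 ≤ a) (ha1 : a < 1) :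
    IntervalIntegrable (weight a) volume (-1) 1 := by
  refine ((intervalIntegrable_one_sub_rpow_neg ha1).const_mul (2 ^ a)).mono_fun'
    (Measurable.aestronglyMeasurable (by unfold weight; fun_prop)) ?_
  rw [uIoc_of_le (by norm_num)]
  filter_upwards [ae_restrict_mem measurableSet_Ioc] with s hs
  have hs' : s ∈ Icc (-1) 1 := Ioc_subset_Icc_self hs
  rw [norm_of_nonneg (weight_nonneg hs')]
  exact weight_le_two_rpow_mul ha hs'


theorem intervalIntegrable_weight_add_weight_neg (ha : 0 ≤ a) (ha1 : a < 1) {c d : ℝ}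
    (hc : c ∈ Icc (-1) 1) (hd : d ∈ Icc (-1) 1) :
    IntervalIntegrable (fun s => weight a s + weight a (-s)) volume c d :=
  intervalIntegrable_of_mem_Icc ((intervalIntegrable_weight ha ha1).add
    (intervalIntegrable_comp_neg_of_symm (intervalIntegrable_weight ha ha1))) hc hd

theorem intervalIntegrable_weight_sub_weight_neg (ha : 0 ≤ a) (ha1 : a < 1) {c d : ℝ}
    (hc : c ∈ Icc (-1) 1) (hd : d ∈ Icc (-1) 1) :
    IntervalIntegrable (fun s => weight a s - weight a (-s)) volume c d :=
  intervalIntegrable_of_mem_Icc ((intervalIntegrable_weight ha ha1).sub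
    (intervalIntegrable_comp_neg_of_symm (intervalIntegrable_weight ha ha1))) hc hd

theorem weight_neg_le_weight (ha : 0 ≤ a) (hs : s ∈ Icc 0 1) :
    weight a (-s) ≤ weight a s := by
  rcases hs.2.eq_or_lt with rfl | hs1
  · -- both sides are `0 ^ a`, as `2 / 0 = 0`
    norm_num [weight]
  have h1 := one_le_weight ha ⟨hs.1, hs1⟩
  rw [weight_neg ⟨by linarith [hs.1], hs.2⟩]
  exact (inv_le_one_of_one_le₀ h1).trans h1

theorem integral_weight_sub_weight_neg_pos (ha : 0 < a) (ha1 : a < 1) :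
    0 < ∫ s in (0 : ℝ)..1, (weight a s - weight a (-s)) := by
  refine intervalIntegral_pos_of_pos_on
    (intervalIntegrable_weight_sub_weight_neg ha.le ha1 (by norm_num) (by norm_num))
    (fun s hs => ?_) one_pos
  have h1 := one_lt_weight ha hs
  rw [sub_pos, weight_neg ⟨by linarith [hs.1], hs.2.le⟩]
  exact (inv_lt_one_of_one_lt₀ h1).trans h1

theorem weight_sub_weight_neg_le (ha : 0 ≤ a) (hs : s ∈ Ico 0 1) :
    weight a s - weight a (-s) ≤ 2 ^ (2 * a) * (1 - s) ^ (-(2 * a)) - 1 := by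
  have hs' : s ∈ Icc (-1) 1 := ⟨by linarith [hs.1], hs.2.le⟩
  have h1 := one_le_weight ha hs
  have hsq : weight a s - (weight a s)⁻¹ ≤ weight a s ^ 2 - 1 := by
    have hinv : weight a s * (weight a s)⁻¹ = 1 := mul_inv_cancel₀ (by linarith)
    have hinv1 : (weight a s)⁻¹ ≤ 1 := inv_le_one_of_one_le₀ h1
    nlinarith
  rw [weight_neg hs', ← weight_two_mul hs'] at *
  linarith [weight_le_two_rpow_mul (by linarith : 0 ≤ 2 * a) hs']

theorem integral_weight_sub_weight_neg_le (ha : 0 ≤ a) (ha1 : 2 * a < 1) :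
    ∫ s in (0 : ℝ)..1, (weight a s - weight a (-s)) ≤ 2 ^ (2 * a) / (1 - 2 * a) - 1 := by
  have hG : IntervalIntegrable (fun s => 2 ^ (2 * a) * (1 - s) ^ (-(2 * a))) volume 0 1 :=
    intervalIntegrable_of_mem_Icc ((intervalIntegrable_one_sub_rpow_neg ha1).const_mul _)
      (by norm_num) (by norm_num)
  calc ∫ s in (0 : ℝ)..1, (weight a s - weight a (-s))
      ≤ ∫ s in (0 : ℝ)..1, (2 ^ (2 * a) * (1 - s) ^ (-(2 * a)) - 1) :=
        integral_mono_on_of_le_Ioo zero_le_one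
          (intervalIntegrable_weight_sub_weight_neg ha (by linarith) (by norm_num) (by norm_num))
          (hG.sub intervalIntegrable_const)
          (fun s hs => weight_sub_weight_neg_le ha (Ioo_subset_Ico_self hs))
    _ = 2 ^ (2 * a) / (1 - 2 * a) - 1 := by
        rw [integral_sub hG intervalIntegrable_const, intervalIntegral.integral_const_mul,
          integral_one_sub_rpow_neg ha1, integral_one]
        ring

theorem two_mul_le_integral_weight_add_weight_neg (ha : 0 ≤ a) (ha1 : a < 1) {c : ℝ}
    (hc : c ∈ Ico 0 1) : 2 * c ≤ ∫ s in (0 : ℝ)..c, (weight a s + weight a (-s)) := by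
  have hmono := integral_mono_on hc.1 (intervalIntegrable_const (c := (2 : ℝ)))
    (intervalIntegrable_weight_add_weight_neg ha ha1 (by norm_num)
      ⟨by linarith [hc.1], hc.2.le⟩)
    (fun s hs => ?_)
  · simpa [mul_comm] using hmono
  have hs' : s ∈ Ioo (-1) 1 := ⟨by linarith [hs.1], by linarith [hs.2, hc.2]⟩
  have hpos := weight_pos (a := a) hs'
  have hinv : weight a s * (weight a s)⁻¹ = 1 := mul_inv_cancel₀ hpos.ne'
  rw [weight_neg (Ioo_subset_Icc_self hs')]
  nlinarith [sq_nonneg (weight a s - 1), inv_pos.2 hpos]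

end Weight

theorem two_rpow_div_one_sub_sub_one_le {b : ℝ} (hb : 0 ≤ b) (hb1 : b ≤ 1 / 50) :
    2 ^ b / (1 - b) - 1 ≤ 2 * b := by
  have hlog0 : 0 < log 2 := log_pos one_lt_two
  have hlog1 : log 2 < 0.7 := by linarith [log_two_lt_d9]
  have hexp : (2 : ℝ) ^ b ≤ 1 / (1 - b * log 2) := by
    rw [rpow_def_of_pos two_pos, mul_comm]
    exact exp_bound_div_one_sub_of_interval (by positivity) (by nlinarith)
  have hcubic : 1 ≤ (1 + 2 * b) * (1 - b) * (1 - b * log 2) := by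
    nlinarith [mul_nonneg (mul_nonneg hb hb) hlog0.le, mul_nonneg hb hlog0.le]
  rw [sub_le_iff_le_add, div_le_iff₀ (by linarith)]
  calc (2 : ℝ) ^ b ≤ 1 / (1 - b * log 2) := hexp
    _ ≤ (1 + 2 * b) * (1 - b) := by
        rw [div_le_iff₀ (by nlinarith)]
        linarith
    _ = (2 * b + 1) * (1 - b) := by ring

theorem balance_point_mem_Ioc {a t : ℝ} (ha : 0 < a) (ha1 : a ≤ 1 / 100)
    (ht : t ∈ Ioo (-1) 1)
    (hbal : ∫ s in (-1 : ℝ)..t, weight a s = ∫ s in t..1, weight a s) :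
    t ∈ Ioc 0 (2 * a) := by
  have hw := intervalIntegrable_weight ha.le (by linarith)
  have hmono := imbalance_strictMonoOn hw (fun s hs => weight_pos hs)
  have hmem : ∀ c ∈ Icc (0 : ℝ) 1, c ∈ Icc (-1 : ℝ) 1 := fun c hc =>
    ⟨by linarith [hc.1], hc.2⟩
  have h2a : 2 * a ∈ Icc (0 : ℝ) 1 := ⟨by linarith, by linarith⟩
  have ht0 : imbalance (weight a) (-1) 1 t = 0 := sub_eq_zero.2 hbal
  have hneg : imbalance (weight a) (-1) 1 0 < 0 := by
    rw [imbalance_eq_integral_even_sub_integral_odd hw (by norm_num), integral_same, zero_sub,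
      neg_neg_iff_pos]
    exact integral_weight_sub_weight_neg_pos ha (by linarith)
  have hnonneg : 0 ≤ imbalance (weight a) (-1) 1 (2 * a) := by
    rw [imbalance_eq_integral_even_sub_integral_odd hw (hmem _ h2a), sub_nonneg]
    calc ∫ s in 2 * a..1, (weight a s - weight a (-s))
        ≤ ∫ s in (0 : ℝ)..1, (weight a s - weight a (-s)) :=
          integral_mono_interval h2a.1 h2a.2 le_rfl
            (ae_restrict_of_forall_mem measurableSet_Ioc fun s hs =>
              sub_nonneg.2 (weight_neg_le_weight ha.le (Ioc_subset_Icc_self hs)))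
            (intervalIntegrable_weight_sub_weight_neg ha.le (by linarith) (by norm_num)
              (by norm_num))
      _ ≤ 2 ^ (2 * a) / (1 - 2 * a) - 1 := integral_weight_sub_weight_neg_le ha.le (by linarith)
      _ ≤ 2 * (2 * a) := two_rpow_div_one_sub_sub_one_le (by linarith) (by linarith)
      _ ≤ ∫ s in (0 : ℝ)..2 * a, (weight a s + weight a (-s)) :=
          two_mul_le_integral_weight_add_weight_neg ha.le (by linarith) ⟨h2a.1, by linarith⟩
  have htI : t ∈ Icc (-1 : ℝ) 1 := Ioo_subset_Icc_self ht
  exact ⟨(hmono.lt_iff_lt (by norm_num) htI).1 (hneg.trans_eq ht0.symm),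
    (hmono.le_iff_le htI (hmem _ h2a)).1 (ht0.trans_le hnonneg)⟩

end BalancePoint

/-- There is `θ_0 > 0` so that for `0 < θ ≤ θ_0`, the balancing point `t_θ ∈ (-1,1)` of
`((1+t)/(1-t))^{θ/π}` satisfies `0 < t_θ ≤ 2θ/π`. -/
theorem balance_point_decay :
    ∃ θ₀ : ℝ, 0 < θ₀ ∧ ∀ θ : ℝ, 0 < θ → θ ≤ θ₀ →
      ∀ t ∈ Set.Ioo (-1 : ℝ) 1,
        (∫ s in (-1 : ℝ)..t, ((1 + s) / (1 - s)) ^ (θ / Real.pi)) =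
            (∫ s in t..(1 : ℝ), ((1 + s) / (1 - s)) ^ (θ / Real.pi)) →
          0 < t ∧ t ≤ 2 * θ / Real.pi := by
  refine ⟨π / 100, by positivity, fun θ hθ hθ₀ t ht hbal => ?_⟩
  have ha1 : θ / π ≤ 1 / 100 := by
    rw [div_le_div_iff₀ pi_pos (by norm_num)]
    linarith
  rw [mul_div_assoc]
  exact BalancePoint.balance_point_mem_Ioc (div_pos hθ pi_pos) ha1 ht hbal
end

section
/- There exists θ_0 > 0 such that for all θ with 0 < θ ≤ θ_0, ((1/2)^{θ/π})/(1 + θ/π) + (1 - 2(1 - 2θ/π)^{1 - 2θ/π})/(1 - 2θ/π) ≥ 0. -/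
lemma exp_quad_bound {t : ℝ} (ht : t ≤ 0) : Real.exp t ≤ 1 + t + t ^ 2 := by
  have h1 : 1 - t ≤ Real.exp (-t) := by
    have := Real.add_one_le_exp (-t); linarith
  have hpos : (0:ℝ) < 1 - t := by linarith
  have h2 : Real.exp t ≤ 1 / (1 - t) := by
    rw [le_div_iff₀ hpos]
    calc Real.exp t * (1 - t) ≤ Real.exp t * Real.exp (-t) := by
          exact mul_le_mul_of_nonneg_left h1 (Real.exp_pos t).le
      _ = 1 := by rw [← Real.exp_add]; simp
  have h3 : 1 / (1 - t) ≤ 1 + t + t ^ 2 := by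
    rw [div_le_iff₀ hpos]
    nlinarith [sq_nonneg t, mul_nonneg (sq_nonneg t) (neg_nonneg.mpr ht)]
  linarith

lemma aux_ineq (x : ℝ) (hx : 0 < x) (hx' : x ≤ 1 / 100) :
    0 ≤ ((1 / 2 : ℝ) ^ x) / (1 + x) +
      (1 - 2 * (1 - 2 * x) ^ (1 - 2 * x)) / (1 - 2 * x) := by
  have hu : (0:ℝ) < 1 - 2 * x := by linarith
  have hu1 : 1 - 2 * x ≤ 1 := by linarith
  set u : ℝ := 1 - 2 * x with hud
  set L : ℝ := Real.log u with hLd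
  have hL1 : L ≤ -(2 * x) := by
    have := Real.log_le_sub_one_of_pos hu
    simpa [hLd, hud] using this
  have hL2 : -(3 * x) ≤ L := by
    have h := Real.log_le_sub_one_of_pos (inv_pos.mpr hu)
    rw [Real.log_inv] at h
    have hinv : u⁻¹ - 1 = 2 * x / u := by
      field_simp
      rw [hud]; ring
    rw [hinv] at h
    have : 2 * x / u ≤ 3 * x := by
      rw [div_le_iff₀ hu]
      nlinarith
    linarith
  have hL0 : L ≤ 0 := by nlinarith
  have hpowu : u ^ u = Real.exp (u * L) := by
    rw [Real.rpow_def_of_pos hu, mul_comm]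
  have hexpu : Real.exp (u * L) ≤ 1 + u * L + (u * L) ^ 2 :=
    exp_quad_bound (mul_nonpos_of_nonneg_of_nonpos hu.le hL0)
  -- bound on (1/2)^x
  have hhalf : (1 / 2 : ℝ) ^ x = Real.exp (-(Real.log 2) * x) := by
    rw [Real.rpow_def_of_pos (by norm_num : (0:ℝ) < 1/2)]
    rw [one_div, Real.log_inv]
  have hA : 1 - Real.log 2 * x ≤ (1 / 2 : ℝ) ^ x := by
    rw [hhalf]
    have := Real.add_one_le_exp (-(Real.log 2) * x)
    linarith
  have hlog2 : Real.log 2 ≤ 0.7 := by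
    have := Real.log_two_lt_d9; linarith
  have hlog2' : 0 < Real.log 2 := Real.log_pos (by norm_num)
  have h1x : (0:ℝ) < 1 + x := by linarith
  -- reduce to cleared denominators
  rw [div_add_div _ _ (ne_of_gt h1x) (ne_of_gt hu), le_div_iff₀ (mul_pos h1x hu)]
  rw [hpowu]
  have hLsq : L ^ 2 ≤ 9 * x ^ 2 := by nlinarith
  have huL : u * L ≤ -(2 * x) + 4 * x ^ 2 := by nlinarith
  have hu2 : u ^ 2 ≤ 1 := by nlinarith
  have huL2 : (u * L) ^ 2 ≤ 9 * x ^ 2 := by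
    have h1 : (u * L) ^ 2 = u ^ 2 * L ^ 2 := by ring
    have h2 : u ^ 2 * L ^ 2 ≤ 1 * L ^ 2 :=
      mul_le_mul_of_nonneg_right hu2 (sq_nonneg L)
    nlinarith
  have hE : Real.exp (u * L) ≤ 1 - 2 * x + 13 * x ^ 2 := by linarith
  have hAlb : 1 - 0.7 * x ≤ (1 / 2 : ℝ) ^ x := by
    have : Real.log 2 * x ≤ 0.7 * x := mul_le_mul_of_nonneg_right hlog2 hx.le
    linarith
  have hAu : (1 - 0.7 * x) * u ≤ (1 / 2 : ℝ) ^ x * u :=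
    mul_le_mul_of_nonneg_right hAlb hu.le
  have hBu : (1 + x) * (-1 + 4 * x - 26 * x ^ 2) ≤ (1 + x) * (1 - 2 * Real.exp (u * L)) :=
    mul_le_mul_of_nonneg_left (by linarith) h1x.le
  nlinarith [mul_pos hx hx, mul_nonneg (mul_nonneg hx.le hx.le) hx.le]

/-- There exists `θ_0 > 0` such that for `0 < θ ≤ θ_0`,
`((1/2)^{θ/π})/(1+θ/π) + (1 - 2(1-2θ/π)^{1-2θ/π})/(1-2θ/π) ≥ 0`. -/
theorem antiderivative_expression_nonneg :
    ∃ θ₀ : ℝ, 0 < θ₀ ∧ ∀ θ : ℝ, 0 < θ → θ ≤ θ₀ →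
      0 ≤ ((1 / 2 : ℝ) ^ (θ / Real.pi)) / (1 + θ / Real.pi) +
        (1 - 2 * (1 - 2 * θ / Real.pi) ^ (1 - 2 * θ / Real.pi)) / (1 - 2 * θ / Real.pi) := by
  refine ⟨Real.pi / 100, by positivity, fun θ hθ hθ' => ?_⟩
  have hpi := Real.pi_pos
  have hx : 0 < θ / Real.pi := div_pos hθ hpi
  have hx' : θ / Real.pi ≤ 1 / 100 := by
    rw [div_le_div_iff₀ hpi (by norm_num)]
    linarith
  have := aux_ineq (θ / Real.pi) hx hx'
  rw [← mul_div_assoc] at this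
  exact this
end
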